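/- arXiv:2104.11789 — 2 statements merged into one kernel-verified Lean document; each statement's English description precedes it below -/
import Mathlib

section
/- Let A ∈ ℝ^{m×m} be symmetric positive semidefinite and f ∈ ℝ^m. The function d(γ) = −(1/(4γ)) fᵀ (γ^{-1} I + A)^{-1} f, defined for γ > 0, is nondecreasing in γ. Consequently sup_{γ>0} d(γ) = lim_{γ→∞} d(γ). -/
/-!
For `γ > 0` we have `(γ⁻¹ I + A)⁻¹ = γ (I + γ A)⁻¹`, so `d γ = -¼ fᵀ (I + γ A)⁻¹ f`. As `γ` grows,
`I + γ A` increases in the Loewner order, and `B ↦ fᵀ B⁻¹ f` is antitone on positive definite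
matrices because `fᵀ B⁻¹ f = max_x (2 fᵀ x - xᵀ B x)`. A monotone function has its limit at `∞` as
its supremum.
-/

open Filter Matrix

theorem Matrix.PosSemidef.posDef_one_add_smul {n : Type*} [DecidableEq n] {A : Matrix n n ℝ}
    (hA : A.PosSemidef) {γ : ℝ} (hγ : 0 ≤ γ) : (1 + γ • A).PosDef :=
  PosDef.one.add_posSemidef (hA.smul hγ)

namespace Matrix

variable {n : Type*} [Fintype n] [DecidableEq n]

theorem PosDef.two_mul_dotProduct_sub_le_dotProduct_inv_mulVec {B : Matrix n n ℝ}
    (hB : B.PosDef) (f x : n → ℝ) :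
    2 * (f ⬝ᵥ x) - x ⬝ᵥ B *ᵥ x ≤ f ⬝ᵥ B⁻¹ *ᵥ f := by
  set v := B⁻¹ *ᵥ f
  have hBv : B *ᵥ v = f := by
    rw [mulVec_mulVec, mul_nonsing_inv _ hB.det_pos.ne'.isUnit, one_mulVec]
  have hBt : Bᵀ = B := hB.isHermitian
  have hvx : v ⬝ᵥ B *ᵥ x = f ⬝ᵥ x := by
    rw [dotProduct_mulVec, ← mulVec_transpose, hBt, hBv]
  -- `v = B⁻¹ f` completes the square: `(x - v)ᵀ B (x - v) ≥ 0`.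
  have hsq := hB.posSemidef.dotProduct_mulVec_nonneg (x - v)
  simp only [star_trivial, mulVec_sub, dotProduct_sub, sub_dotProduct, hBv, hvx] at hsq
  rw [dotProduct_comm x f, dotProduct_comm v f] at hsq
  linarith

theorem PosDef.dotProduct_inv_mulVec_eq {B : Matrix n n ℝ} (hB : B.PosDef) (f : n → ℝ) :
    f ⬝ᵥ B⁻¹ *ᵥ f = 2 * (f ⬝ᵥ B⁻¹ *ᵥ f) - (B⁻¹ *ᵥ f) ⬝ᵥ B *ᵥ (B⁻¹ *ᵥ f) := by
  have hBv : B *ᵥ (B⁻¹ *ᵥ f) = f := by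
    rw [mulVec_mulVec, mul_nonsing_inv _ hB.det_pos.ne'.isUnit, one_mulVec]
  rw [hBv, dotProduct_comm _ f]
  ring

theorem PosDef.dotProduct_inv_mulVec_le_of_posSemidef_sub {B₁ B₂ : Matrix n n ℝ}
    (h₁ : B₁.PosDef) (hle : (B₂ - B₁).PosSemidef) (f : n → ℝ) :
    f ⬝ᵥ B₂⁻¹ *ᵥ f ≤ f ⬝ᵥ B₁⁻¹ *ᵥ f := by
  have h₂ : B₂.PosDef := by simpa using h₁.add_posSemidef hle
  set u := B₂⁻¹ *ᵥ f
  have hu : u ⬝ᵥ B₁ *ᵥ u ≤ u ⬝ᵥ B₂ *ᵥ u := by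
    have := hle.dotProduct_mulVec_nonneg u
    rw [star_trivial, sub_mulVec, dotProduct_sub] at this
    linarith
  calc f ⬝ᵥ B₂⁻¹ *ᵥ f = 2 * (f ⬝ᵥ u) - u ⬝ᵥ B₂ *ᵥ u := h₂.dotProduct_inv_mulVec_eq f
    _ ≤ 2 * (f ⬝ᵥ u) - u ⬝ᵥ B₁ *ᵥ u := by linarith
    _ ≤ f ⬝ᵥ B₁⁻¹ *ᵥ f := h₁.two_mul_dotProduct_sub_le_dotProduct_inv_mulVec f u

theorem PosSemidef.antitoneOn_dotProduct_inv_one_add_smul_mulVec {A : Matrix n n ℝ}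
    (hA : A.PosSemidef) (f : n → ℝ) :
    AntitoneOn (fun γ : ℝ ↦ f ⬝ᵥ (1 + γ • A)⁻¹ *ᵥ f) (Set.Ici 0) := by
  intro a ha b _ hab
  refine (hA.posDef_one_add_smul ha).dotProduct_inv_mulVec_le_of_posSemidef_sub ?_ f
  rw [add_sub_add_left_eq_sub, ← sub_smul]
  exact hA.smul (sub_nonneg.mpr hab)

theorem PosSemidef.inv_inv_smul_one_add {A : Matrix n n ℝ} (hA : A.PosSemidef) {γ : ℝ}
    (hγ : 0 < γ) : (γ⁻¹ • (1 : Matrix n n ℝ) + A)⁻¹ = γ • (1 + γ • A)⁻¹ := by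
  have hsplit : γ⁻¹ • (1 : Matrix n n ℝ) + A = (Units.mk0 γ hγ.ne')⁻¹ • (1 + γ • A) := by
    rw [Units.smul_def, Units.val_inv_eq_inv_val, Units.val_mk0, smul_add,
      inv_smul_smul₀ hγ.ne']
  rw [hsplit, inv_smul' _ _ (hA.posDef_one_add_smul hγ.le).det_pos.ne'.isUnit, inv_inv,
    Units.smul_def, Units.val_mk0]

end Matrix

theorem MonotoneOn.isLUB_image_Ioi_of_tendsto_atTop {α β : Type*} [TopologicalSpace α]
    [Preorder α] [OrderClosedTopology α] [LinearOrder β] [NoMaxOrder β] {f : β → α} {a : β}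
    {L : α} (hf : MonotoneOn f (Set.Ioi a)) (hL : Tendsto f atTop (nhds L)) :
    IsLUB (f '' Set.Ioi a) L := by
  rw [Set.image_eq_range]
  exact isLUB_of_tendsto_atTop (fun x y hxy ↦ hf x.2 y.2 hxy)
    (hL.comp (tendsto_Ioi_atTop.mp tendsto_id))

theorem stmt4_general (m : ℕ) (A : Matrix (Fin m) (Fin m) ℝ) (hApsd : A.PosSemidef)
    (f : Fin m → ℝ) (d : ℝ → ℝ)
    (hd : ∀ γ : ℝ, d γ = -(1 / (4 * γ)) *
      dotProduct f (((γ⁻¹ • (1 : Matrix (Fin m) (Fin m) ℝ) + A)⁻¹).mulVec f)) :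
    MonotoneOn d (Set.Ioi (0 : ℝ)) ∧
    ∀ L : ℝ, Tendsto d atTop (nhds L) → IsLUB (d '' Set.Ioi (0 : ℝ)) L := by
  have hd' : ∀ γ > 0, d γ = -(1 / 4) * (f ⬝ᵥ (1 + γ • A)⁻¹ *ᵥ f) := by
    intro γ hγ
    rw [hd, hApsd.inv_inv_smul_one_add hγ, smul_mulVec, dotProduct_smul, smul_eq_mul]
    field_simp
  have hmono : MonotoneOn d (Set.Ioi 0) := by
    intro a ha b hb hab
    have := hApsd.antitoneOn_dotProduct_inv_one_add_smul_mulVec f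
      (Set.Ioi_subset_Ici_self ha) (Set.Ioi_subset_Ici_self hb) hab
    rw [hd' a ha, hd' b hb]
    linarith
  exact ⟨hmono, fun L hL ↦ hmono.isLUB_image_Ioi_of_tendsto_atTop hL⟩

/-- the dual function is nondecreasing in γ and its supremum equals its limit. -/
theorem stmt4 (m : ℕ) (A : Matrix (Fin m) (Fin m) ℝ) (hA : A.IsSymm) (hApsd : A.PosSemidef)
    (f : Fin m → ℝ) (d : ℝ → ℝ)
    (hd : ∀ γ : ℝ, d γ = -(1 / (4 * γ)) *
      dotProduct f (((γ⁻¹ • (1 : Matrix (Fin m) (Fin m) ℝ) + A)⁻¹).mulVec f)) :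
    MonotoneOn d (Set.Ioi (0 : ℝ)) ∧
    ∀ L : ℝ, Tendsto d atTop (nhds L) → IsLUB (d '' Set.Ioi (0 : ℝ)) L :=
  stmt4_general m A hApsd f d hd
end

section
/- Let W be a type (parameter values), and for each w ∈ W let H̄(w) ∈ ℝ^{m×p} and F̄(w) ∈ ℝ^{m×s}. Suppose for a fixed w, rank([H̄(w) F̄(w)]) > rank(H̄(w)). Then the optimal value of the problem minimize −max_j |N F̄(w) e_j| + ‖N‖² over row vectors N ∈ ℝ^{1×m} subject to N H̄(w) = 0 is strictly negative, and in particular any optimizer N* satisfies N* F̄(w) ≠ 0. -/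
open Finset Matrix

/-
By rank–nullity for the transposes, the rank condition says exactly that the left null space of
`H̄(w)` is not contained in that of `F̄(w)`, so some `N₀` with `N₀ H̄(w) = 0` has a nonzero entry
`a` in `N₀ F̄(w)`. Along the ray `t N₀` the objective is at most `t (-|a| + t ‖N₀‖²)`, which is
negative for small `t > 0`. An optimizer with `N* F̄(w) = 0` would have objective `‖N*‖² ≥ 0`,
contradicting the negative optimal value.
-/

section Rank

variable {K m n o : Type*} [Field K] [Fintype m] [Fintype n] [Fintype o]

theorem rank_fromCols_eq_of_forall_vecMul_eq_zero (H : Matrix m n K) (F : Matrix m o K)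
    (h : ∀ N : m → K, N ᵥ* H = 0 → N ᵥ* F = 0) : (fromCols H F).rank = H.rank := by
  have hker : LinearMap.ker (fromCols H F)ᵀ.mulVecLin = LinearMap.ker Hᵀ.mulVecLin := by
    ext N
    simp only [LinearMap.mem_ker, mulVecLin_apply, ← vecMul_transpose, transpose_transpose,
      vecMul_fromCols]
    exact ⟨fun hN => funext fun i => congrFun hN (Sum.inl i),
      fun hN => by rw [hN, h N hN, Sum.elim_zero_zero]⟩
  have e₁ := LinearMap.finrank_range_add_finrank_ker (fromCols H F)ᵀ.mulVecLin
  have e₂ := LinearMap.finrank_range_add_finrank_ker Hᵀ.mulVecLin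
  rw [hker] at e₁
  rw [← rank_transpose, ← rank_transpose H, rank, rank]
  omega

theorem exists_vecMul_eq_zero_and_vecMul_ne_zero_of_rank_lt (H : Matrix m n K)
    (F : Matrix m o K) (hrank : H.rank < (fromCols H F).rank) :
    ∃ N : m → K, N ᵥ* H = 0 ∧ N ᵥ* F ≠ 0 := by
  by_contra! h
  exact hrank.ne' (rank_fromCols_eq_of_forall_vecMul_eq_zero H F h)

end Rank

section Objective

variable {ι κ : Type*} [Fintype ι] [Finite κ]

theorem mul_abs_vecMul_apply_le_iSup_abs_smul_vecMul (F : Matrix ι κ ℝ) (N : ι → ℝ) {t : ℝ}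
    (ht : 0 ≤ t) (j : κ) :
    t * |(N ᵥ* F) j| ≤ ⨆ k, |((t • N) ᵥ* F) k| := by
  have hj : |((t • N) ᵥ* F) j| = t * |(N ᵥ* F) j| := by
    rw [smul_vecMul, Pi.smul_apply, smul_eq_mul, abs_mul, abs_of_nonneg ht]
  exact hj ▸ le_ciSup (f := fun k => |((t • N) ᵥ* F) k|) (Set.finite_range _).bddAbove j

theorem exists_objective_smul_neg (F : Matrix ι κ ℝ) (N : ι → ℝ) {j : κ}
    (hj : (N ᵥ* F) j ≠ 0) :
    ∃ t : ℝ, 0 < t ∧ -(⨆ k, |((t • N) ᵥ* F) k|) + ∑ i, (t • N) i ^ 2 < 0 := by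
  set a := |(N ᵥ* F) j|
  set b := ∑ i, N i ^ 2
  have ha : 0 < a := abs_pos.mpr hj
  have hb : 0 ≤ b := sum_nonneg fun i _ => sq_nonneg (N i)
  set t := a / (b + 1)
  have ht : 0 < t := by positivity
  have htb : t * b < a := by
    rw [div_mul_eq_mul_div, div_lt_iff₀ (by positivity)]
    nlinarith
  refine ⟨t, ht, ?_⟩
  have hsum : ∑ i, (t • N) i ^ 2 = t ^ 2 * b := by
    simp only [Pi.smul_apply, smul_eq_mul, mul_pow, mul_sum, b]
  calc -(⨆ k, |((t • N) ᵥ* F) k|) + ∑ i, (t • N) i ^ 2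
      ≤ -(t * a) + t ^ 2 * b := by
        rw [hsum]; linarith [mul_abs_vecMul_apply_le_iSup_abs_smul_vecMul F N ht.le j]
    _ = t * (t * b - a) := by ring
    _ < 0 := mul_neg_of_pos_of_neg ht (by linarith)

end Objective

/-- under the isolability rank condition, the QP of Proposition 1 has a
strictly negative optimal value and any optimizer is fault-sensitive. -/
theorem stmt14 (W : Type*) (m p s : ℕ)
    (Hbar : W → Matrix (Fin m) (Fin p) ℝ) (Fbar : W → Matrix (Fin m) (Fin s) ℝ)
    (w : W) (hrank : (Matrix.fromCols (Hbar w) (Fbar w)).rank > (Hbar w).rank)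
    (φ : (Fin m → ℝ) → ℝ)
    (hφ : ∀ N : Fin m → ℝ,
      φ N = -(⨆ j : Fin s, |Matrix.vecMul N (Fbar w) j|) + ∑ i, (N i) ^ 2) :
    (∃ N : Fin m → ℝ, Matrix.vecMul N (Hbar w) = 0 ∧ φ N < 0) ∧
    (∀ Nstar : Fin m → ℝ,
      (Matrix.vecMul Nstar (Hbar w) = 0 ∧
        ∀ N : Fin m → ℝ, Matrix.vecMul N (Hbar w) = 0 → φ Nstar ≤ φ N) →
      Matrix.vecMul Nstar (Fbar w) ≠ 0) := by
  obtain ⟨N₀, hN₀H, hN₀F⟩ :=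
    exists_vecMul_eq_zero_and_vecMul_ne_zero_of_rank_lt (Hbar w) (Fbar w) hrank
  obtain ⟨j, hj⟩ := Function.ne_iff.mp hN₀F
  obtain ⟨t, -, hneg⟩ := exists_objective_smul_neg (Fbar w) N₀ hj
  have hfeas : (t • N₀) ᵥ* Hbar w = 0 := by rw [smul_vecMul, hN₀H, smul_zero]
  have hφneg : φ (t • N₀) < 0 := hφ _ ▸ hneg
  refine ⟨⟨t • N₀, hfeas, hφneg⟩, ?_⟩
  rintro Nstar ⟨-, hopt⟩ hNstarF
  have hφNstar : 0 ≤ φ Nstar := by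
    rw [hφ, hNstarF]
    simpa only [Pi.zero_apply, abs_zero, Real.iSup_const_zero, neg_zero, zero_add]
      using sum_nonneg fun i _ => sq_nonneg (Nstar i)
  linarith [hopt _ hfeas]
end
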